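/- Let p > 2 be a prime and G = ⟨a, b⟩ ≅ C_p × C_p acting on ℝ^{p²} via Γ₀, and let X, Y ∈ ℚ^{p²} be as above (with α = (ε − 1)^{-1}). Then for any 1-cocycle f : G → ℝ^{p²}/ℤ^{p²} with f(a) = X + ℤ^{p²} and f(b) = Y + ℤ^{p²}, the generalized crystallographic group Crys(G; Γ₀; f) is torsion-free. -/

import Mathlib

open Matrix

namespace GenCrys

variable {K : Type*} [CommRing K] {F : Type*} [Field F] {G : Type*} [Group G]

/-- The lattice `K^d` inside `F^d`, embedded via the ring hom `φ`. -/
def latt (φ : K →+* F) (d : ℕ) : AddSubgroup (Fin d → F) where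
  carrier := {x | ∀ i, ∃ m : K, x i = φ m}
  zero_mem' := fun i => ⟨0, by simp⟩
  add_mem' := by
    intro x y hx hy i
    obtain ⟨mx, hmx⟩ := hx i
    obtain ⟨my, hmy⟩ := hy i
    exact ⟨mx + my, by simp [hmx, hmy]⟩
  neg_mem' := by
    intro x hx i
    obtain ⟨m, hm⟩ := hx i
    exact ⟨-m, by simp [hm]⟩

/-- The "torus" `F^d / K^d`. -/
abbrev Torus (φ : K →+* F) (d : ℕ) : Type _ := (Fin d → F) ⧸ latt φ d

/-- The canonical projection `F^d → F^d/K^d`. -/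
def mkT (φ : K →+* F) {d : ℕ} : (Fin d → F) →+ Torus φ d := QuotientAddGroup.mk' (latt φ d)

lemma mulVec_mem_latt (φ : K →+* F) {d : ℕ} (M : Matrix (Fin d) (Fin d) K) {x : Fin d → F}
    (hx : x ∈ latt φ d) : (M.map φ).mulVec x ∈ latt φ d := by
  choose m hm using hx
  intro i
  refine ⟨∑ j, M i j * m j, ?_⟩
  simp [Matrix.mulVec, dotProduct, Matrix.map_apply, hm, map_sum, _root_.map_mul]

/-- The action of an integral matrix on the torus `F^d/K^d`. -/
def torusMap (φ : K →+* F) {d : ℕ} (M : Matrix (Fin d) (Fin d) K) : Torus φ d →+ Torus φ d :=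
  QuotientAddGroup.map (latt φ d) (latt φ d)
    (AddMonoidHom.mk' (fun x => (M.map φ).mulVec x) (fun x y => Matrix.mulVec_add _ x y))
    (fun x hx => mulVec_mem_latt φ M hx)

lemma torusMap_mk (φ : K →+* F) {d : ℕ} (M : Matrix (Fin d) (Fin d) K) (x : Fin d → F) :
    torusMap φ M (mkT φ x) = mkT φ ((M.map φ).mulVec x) := rfl

lemma torusMap_one (φ : K →+* F) {d : ℕ} (z : Torus φ d) :
    torusMap φ (1 : Matrix (Fin d) (Fin d) K) z = z := by
  refine QuotientAddGroup.induction_on z fun x => ?_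
  show torusMap φ (1 : Matrix (Fin d) (Fin d) K) (mkT φ x) = mkT φ x
  rw [torusMap_mk]
  congr 1
  simp

/-- A 1-cocycle of `G` with values in the torus, with `G` acting via `ρ`. -/
def IsCocycle (φ : K →+* F) {d : ℕ} (ρ : G →* Matrix.GeneralLinearGroup (Fin d) K)
    (f : G → Torus φ d) : Prop :=
  ∀ g g' : G, f (g * g') = torusMap φ (ρ g : Matrix (Fin d) (Fin d) K) (f g') + f g

/-- The restriction of `f` to the subgroup `H` is a 1-coboundary. -/
def IsCoboundaryOn (φ : K →+* F) {d : ℕ} (ρ : G →* Matrix.GeneralLinearGroup (Fin d) K)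
    (f : G → Torus φ d) (H : Subgroup G) : Prop :=
  ∃ z : Torus φ d, ∀ h ∈ H, f h = torusMap φ (ρ h : Matrix (Fin d) (Fin d) K) z - z

/-- The `K[G]`-module `K^d` (with `g` acting as `ρ g`) is indecomposable. -/
def Indecomposable {d : ℕ} (ρ : G →* Matrix.GeneralLinearGroup (Fin d) K) : Prop :=
  ¬ ∃ A B : Submodule K (Fin d → K),
      (∀ g : G, ∀ x ∈ A, (ρ g : Matrix (Fin d) (Fin d) K).mulVec x ∈ A) ∧
      (∀ g : G, ∀ x ∈ B, (ρ g : Matrix (Fin d) (Fin d) K).mulVec x ∈ B) ∧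
      A ≠ ⊥ ∧ B ≠ ⊥ ∧ A ⊓ B = ⊥ ∧ A ⊔ B = ⊤

/-- The semidirect product `F^d ⋊ G`, with `G` acting via `ρ`. -/
@[ext] structure SD (φ : K →+* F) {d : ℕ} (ρ : G →* Matrix.GeneralLinearGroup (Fin d) K) where
  vec : Fin d → F
  grp : G

namespace SD

variable (φ : K →+* F) {d : ℕ} (ρ : G →* Matrix.GeneralLinearGroup (Fin d) K)

/-- The action of `g : G` on `F^d` via `ρ`. -/
def act (g : G) (x : Fin d → F) : Fin d → F :=
  ((ρ g : Matrix (Fin d) (Fin d) K).map φ).mulVec x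

lemma act_add (g : G) (x y : Fin d → F) :
    act φ ρ g (x + y) = act φ ρ g x + act φ ρ g y := Matrix.mulVec_add _ x y

lemma act_zero (g : G) : act φ ρ g (0 : Fin d → F) = 0 := Matrix.mulVec_zero _

lemma act_one (x : Fin d → F) : act φ ρ 1 x = x := by
  simp [act, Matrix.map_one]

lemma act_mul (g h : G) (x : Fin d → F) :
    act φ ρ (g * h) x = act φ ρ g (act φ ρ h x) := by
  simp [act, Matrix.mulVec_mulVec, ← Matrix.map_mul, _root_.map_mul]

instance : Mul (SD φ ρ) := ⟨fun c c' => ⟨c.vec + act φ ρ c.grp c'.vec, c.grp * c'.grp⟩⟩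
instance : One (SD φ ρ) := ⟨⟨0, 1⟩⟩
instance : Inv (SD φ ρ) := ⟨fun c => ⟨-(act φ ρ c.grp⁻¹ c.vec), c.grp⁻¹⟩⟩

@[simp] lemma mul_vec (c c' : SD φ ρ) :
    (c * c').vec = c.vec + act φ ρ c.grp c'.vec := rfl
@[simp] lemma mul_grp (c c' : SD φ ρ) : (c * c').grp = c.grp * c'.grp := rfl
@[simp] lemma one_vec : (1 : SD φ ρ).vec = 0 := rfl
@[simp] lemma one_grp : (1 : SD φ ρ).grp = 1 := rfl
@[simp] lemma inv_vec (c : SD φ ρ) : c⁻¹.vec = -(act φ ρ c.grp⁻¹ c.vec) := rfl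
@[simp] lemma inv_grp (c : SD φ ρ) : c⁻¹.grp = c.grp⁻¹ := rfl

instance : Group (SD φ ρ) where
  mul_assoc a b c := by
    ext1
    · simp [act_mul, act_add, add_assoc]
    · simp [mul_assoc]
  one_mul a := by
    ext1
    · simp [act_one]
    · simp
  mul_one a := by
    ext1
    · simp [act_zero]
    · simp
  inv_mul_cancel a := by
    ext1
    · simp
    · simp

end SD

/-- Membership in the generalized crystallographic group `Crys(G; ρ; f)`,
viewed as a subset of the semidirect product `F^d ⋊ G`. -/
def MemCrys (φ : K →+* F) {d : ℕ} (ρ : G →* Matrix.GeneralLinearGroup (Fin d) K)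
    (f : G → Torus φ d) (c : SD φ ρ) : Prop :=
  mkT φ c.vec = f c.grp

/-- The generalized crystallographic group `Crys(G; ρ; f)` is torsion free. -/
def CrysTorsionFree (φ : K →+* F) {d : ℕ} (ρ : G →* Matrix.GeneralLinearGroup (Fin d) K)
    (f : G → Torus φ d) : Prop :=
  ∀ c : SD φ ρ, MemCrys φ ρ f c → c ≠ 1 → ¬ IsOfFinOrder c

lemma cocycle_map_one (φ : K →+* F) {d : ℕ} (ρ : G →* Matrix.GeneralLinearGroup (Fin d) K)
    {f : G → Torus φ d} (hf : IsCocycle φ ρ f) : f 1 = 0 := by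
  have h := hf 1 1
  rw [mul_one, _root_.map_one] at h
  have h1 : ((1 : Matrix.GeneralLinearGroup (Fin d) K) : Matrix (Fin d) (Fin d) K) = 1 :=
    Units.val_one
  rw [h1, torusMap_one] at h
  exact (right_eq_add.mp h)

/-- The generalized crystallographic group `Crys(G; ρ; f)` as a subgroup of `F^d ⋊ G`. -/
def crysSubgroup (φ : K →+* F) {d : ℕ} (ρ : G →* Matrix.GeneralLinearGroup (Fin d) K)
    (f : G → Torus φ d) (hf : IsCocycle φ ρ f) : Subgroup (SD φ ρ) where
  carrier := {c | MemCrys φ ρ f c}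
  one_mem' := by
    show mkT φ (0 : Fin d → F) = f 1
    rw [map_zero, cocycle_map_one φ ρ hf]
  mul_mem' := by
    intro c c' hc hc'
    show mkT φ (c.vec + SD.act φ ρ c.grp c'.vec) = f (c.grp * c'.grp)
    rw [hf c.grp c'.grp, map_add, ← hc, ← hc', torusMap_mk]
    rw [add_comm]
    rfl
  inv_mem' := by
    intro c hc
    show mkT φ (-(SD.act φ ρ c.grp⁻¹ c.vec)) = f c.grp⁻¹
    have h := hf c.grp⁻¹ c.grp
    rw [inv_mul_cancel, cocycle_map_one φ ρ hf, ← hc, torusMap_mk] at h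
    rw [map_neg]
    exact (eq_neg_of_add_eq_zero_right h.symm).symm

end GenCrys

namespace CpCp

/-- The matrix `ε̃` of multiplication by the primitive `p`-th root of unity `ε` on the ring
`ℤ[ε]` with respect to the `ℤ`-basis `{1, ε, …, ε^{p-2}}`. -/
def eps (p : ℕ) : Matrix (Fin (p - 1)) (Fin (p - 1)) ℤ :=
  Matrix.of fun x y =>
    if (y : ℕ) + 2 < p then (if (x : ℕ) = (y : ℕ) + 1 then 1 else 0) else -1

/-- The entry function of the matrix `ε̃^k` (entries outside the range `p - 1` are zero). -/
def epsE (p k : ℕ) (x y : ℕ) : ℤ :=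
  if hx : x < p - 1 then if hy : y < p - 1 then (eps p ^ k) ⟨x, hx⟩ ⟨y, hy⟩ else 0 else 0

/-- Exponents for `Γ₀(a)` on the diagonal of `τ = ρ_{p-1} ⊕ ⋯ ⊕ ρ₂ ⊕ γ₃ ⊕ γ₂ ⊕ γ₁`:
the `k`-th block of `τ(a)` is `ε̃^(ea p k)`. -/
def ea (p k : ℕ) : ℕ := if k = p then 0 else 1

/-- Exponents for `Γ₀(b)`: the `k`-th block of `τ(b)` is `ε̃^(eb p k)`. -/
def eb (p k : ℕ) : ℕ := if k = p then 1 else p - 1 - k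

/-- The `k`-th block (`k = 0, …, p`) of the intertwining column `U(a)`: `⟨1⟩` for `k ≤ p-1`
and `0` for `k = p`. -/
def Ua (p k t : ℕ) : ℤ := if k ≤ p - 1 ∧ t = 0 then 1 else 0

/-- The `k`-th block of the intertwining column `U(b)`: the coordinate column `⟨α_{k+1}⟩` of
`α_{k+1} = (ε^{p-k-1} - 1)/(ε - 1) = 1 + ε + ⋯ + ε^{p-k-2}` for `k ≤ p-1`, and `⟨1⟩` for
`k = p`. -/
def Ub (p k t : ℕ) : ℤ :=
  if k = p then (if t = 0 then 1 else 0) else if t + k + 1 < p then 1 else 0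

/-- A generic matrix of the shape of `Γ₀(g) = [[τ(g), U(g)], [0, γ₀(g)]]`, where the `k`-th
diagonal block of `τ(g)` is `ε̃^(e k)` and the `k`-th block of the column `U(g)` is
`U k : ℤ^{p-1}`. -/
def Gamma0 (p : ℕ) (e : ℕ → ℕ) (U : ℕ → ℕ → ℤ) : Matrix (Fin (p ^ 2)) (Fin (p ^ 2)) ℤ :=
  Matrix.of fun x y =>
    if (x : ℕ) / (p - 1) = p + 1 then (if (y : ℕ) / (p - 1) = p + 1 then 1 else 0)
    else if (y : ℕ) / (p - 1) = p + 1 then U ((x : ℕ) / (p - 1)) ((x : ℕ) % (p - 1))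
    else if (x : ℕ) / (p - 1) = (y : ℕ) / (p - 1) then
      epsE p (e ((x : ℕ) / (p - 1))) ((x : ℕ) % (p - 1)) ((y : ℕ) % (p - 1))
    else 0

/-- The matrix `Γ₀(a)`. -/
def Gamma0a (p : ℕ) : Matrix (Fin (p ^ 2)) (Fin (p ^ 2)) ℤ := Gamma0 p (ea p) (Ua p)

/-- The matrix `Γ₀(b)`. -/
def Gamma0b (p : ℕ) : Matrix (Fin (p ^ 2)) (Fin (p ^ 2)) ℤ := Gamma0 p (eb p) (Ub p)

end CpCp

section test

namespace CpCp

open GenCrys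
section Aux
open Finset

variable {p : ℕ}

lemma pm1_pos (hp : 2 < p) : 0 < p - 1 := by omega

lemma sq_decomp (hp : 2 < p) : p ^ 2 = (p + 1) * (p - 1) + 1 := by
  obtain ⟨q, rfl⟩ : ∃ q, p = q + 1 := ⟨p - 1, by omega⟩
  simp only [Nat.add_sub_cancel]
  ring

/-- The last index of `Fin (p^2)`. -/
def lastI (p : ℕ) (hp : 2 < p) : Fin (p ^ 2) :=
  ⟨(p + 1) * (p - 1), by rw [sq_decomp hp]; omega⟩

/-- The index of the `t`-th coordinate in block `k`. -/
def idxI (p : ℕ) (hp : 2 < p) (k t : ℕ) (hk : k ≤ p) (ht : t < p - 1) : Fin (p ^ 2) :=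
  ⟨k * (p - 1) + t, by
    rw [sq_decomp hp]
    have h1 : k * (p - 1) ≤ p * (p - 1) := Nat.mul_le_mul_right _ hk
    have h2 : p * (p - 1) + (p - 1) = (p + 1) * (p - 1) := by ring
    omega⟩

lemma idxI_div (hp : 2 < p) {k t : ℕ} (hk : k ≤ p) (ht : t < p - 1) :
    ((idxI p hp k t hk ht : ℕ)) / (p - 1) = k := by
  show (k * (p - 1) + t) / (p - 1) = k
  rw [mul_comm, Nat.mul_add_div (pm1_pos hp), Nat.div_eq_of_lt ht, add_zero]

lemma idxI_mod (hp : 2 < p) {k t : ℕ} (hk : k ≤ p) (ht : t < p - 1) :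
    ((idxI p hp k t hk ht : ℕ)) % (p - 1) = t := by
  show (k * (p - 1) + t) % (p - 1) = t
  rw [mul_comm, Nat.mul_add_mod, Nat.mod_eq_of_lt ht]

lemma lastI_div (hp : 2 < p) : ((lastI p hp : ℕ)) / (p - 1) = p + 1 :=
  Nat.mul_div_cancel _ (pm1_pos hp)

lemma div_eq_last_iff (hp : 2 < p) (u : Fin (p ^ 2)) :
    (u : ℕ) / (p - 1) = p + 1 ↔ u = lastI p hp := by
  constructor
  · intro h
    have h1 : (p + 1) * (p - 1) ≤ (u : ℕ) := by
      calc (p + 1) * (p - 1) = (u : ℕ) / (p - 1) * (p - 1) := by rw [h]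
      _ ≤ (u : ℕ) := Nat.div_mul_le_self _ _
    have h2 : (u : ℕ) < (p + 1) * (p - 1) + 1 := by
      rw [← sq_decomp hp]; exact u.isLt
    exact Fin.ext (by show (u : ℕ) = (p + 1) * (p - 1); omega)
  · rintro rfl; exact lastI_div hp

lemma blk_le (hp : 2 < p) (u : Fin (p ^ 2)) (h : u ≠ lastI p hp) :
    (u : ℕ) / (p - 1) ≤ p := by
  have h2 : (u : ℕ) < (p + 1) * (p - 1) := by
    have h3 : (u : ℕ) < (p + 1) * (p - 1) + 1 := by
      rw [← sq_decomp hp]; exact u.isLt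
    have h4 : (u : ℕ) ≠ (p + 1) * (p - 1) := fun hh => h (Fin.ext hh)
    omega
  have := (Nat.div_lt_iff_lt_mul (pm1_pos hp)).mpr h2
  omega

lemma idx_self (hp : 2 < p) (u : Fin (p ^ 2)) {k : ℕ} (hk : k ≤ p)
    (h : (u : ℕ) / (p - 1) = k) :
    idxI p hp k ((u : ℕ) % (p - 1)) hk (Nat.mod_lt _ (pm1_pos hp)) = u := by
  apply Fin.ext
  show k * (p - 1) + (u : ℕ) % (p - 1) = (u : ℕ)
  rw [← h, mul_comm, Nat.div_add_mod]

/-- Sum over `Fin (p^2)` of a function supported in block `k`. -/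
lemma sum_block {R : Type*} [AddCommMonoid R] (hp : 2 < p) {k : ℕ} (hk : k ≤ p)
    (F : Fin (p ^ 2) → R) (hF : ∀ y : Fin (p ^ 2), (y : ℕ) / (p - 1) ≠ k → F y = 0) :
    ∑ y, F y = ∑ t : Fin (p - 1), F (idxI p hp k t hk t.isLt) := by
  rw [← Finset.sum_filter_of_ne (p := fun y : Fin (p ^ 2) => (y : ℕ) / (p - 1) = k)
    (by intro x _ hx; by_contra hc; exact hx (hF x hc))]
  refine Finset.sum_bij' (fun y hy => (⟨(y : ℕ) % (p - 1), Nat.mod_lt _ (pm1_pos hp)⟩ : Fin (p - 1)))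
    (fun t _ => idxI p hp k t hk t.isLt) ?_ ?_ ?_ ?_ ?_
  · intro y hy; exact Finset.mem_univ _
  · intro t _
    simp only [Finset.mem_filter, Finset.mem_univ, true_and]
    exact idxI_div hp hk t.isLt
  · intro y hy
    simp only [Finset.mem_filter, Finset.mem_univ, true_and] at hy
    exact idx_self hp y hk hy
  · intro t _
    apply Fin.ext
    exact idxI_mod hp hk t.isLt
  · intro y hy
    simp only [Finset.mem_filter, Finset.mem_univ, true_and] at hy
    rw [idx_self hp y hk hy]

end Aux
section Aux2
open Finset

variable {p : ℕ}

lemma epsE_eq (hp : 2 < p) (n : ℕ) {t s : ℕ} (ht : t < p - 1) (hs : s < p - 1) :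
    epsE p n t s = (eps p ^ n) ⟨t, ht⟩ ⟨s, hs⟩ := by
  unfold epsE
  rw [dif_pos ht, dif_pos hs]

lemma Gamma0_last_row (hp : 2 < p) (e : ℕ → ℕ) (U : ℕ → ℕ → ℤ) (y : Fin (p ^ 2)) :
    Gamma0 p e U (lastI p hp) y = if y = lastI p hp then 1 else 0 := by
  unfold Gamma0
  simp only [Matrix.of_apply]
  rw [if_pos (lastI_div hp)]
  by_cases hy : (y : ℕ) / (p - 1) = p + 1
  · rw [if_pos hy, if_pos ((div_eq_last_iff hp y).mp hy)]
  · rw [if_neg hy, if_neg (fun hh => hy (((div_eq_last_iff hp y)).mpr hh))]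

lemma Gamma0_idx_row (hp : 2 < p) (e : ℕ → ℕ) (U : ℕ → ℕ → ℤ) {k t : ℕ} (hk : k ≤ p)
    (ht : t < p - 1) (y : Fin (p ^ 2)) :
    Gamma0 p e U (idxI p hp k t hk ht) y =
      if y = lastI p hp then U k t
      else if (y : ℕ) / (p - 1) = k then epsE p (e k) t ((y : ℕ) % (p - 1)) else 0 := by
  unfold Gamma0
  simp only [Matrix.of_apply]
  rw [if_neg (by rw [idxI_div hp hk ht]; omega)]
  rw [idxI_div hp hk ht, idxI_mod hp hk ht]
  by_cases hy : (y : ℕ) / (p - 1) = p + 1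
  · rw [if_pos hy, if_pos ((div_eq_last_iff hp y).mp hy)]
  · rw [if_neg hy, if_neg (fun hh => hy (((div_eq_last_iff hp y)).mpr hh))]
    by_cases hyk : (y : ℕ) / (p - 1) = k
    · rw [if_pos hyk.symm, if_pos hyk]
    · rw [if_neg (fun hh => hyk hh.symm), if_neg hyk]

variable {R : Type*} [CommRing R]

lemma G0_mulVec_last (hp : 2 < p) (e : ℕ → ℕ) (U : ℕ → ℕ → ℤ) (x : Fin (p ^ 2) → R) :
    (((Gamma0 p e U).map (Int.castRingHom R)).mulVec x) (lastI p hp) = x (lastI p hp) := by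
  show ∑ y, ((Gamma0 p e U) (lastI p hp) y : R) * x y = x (lastI p hp)
  rw [Finset.sum_eq_single (lastI p hp)]
  · rw [Gamma0_last_row hp e U, if_pos rfl]; simp
  · intro y _ hy
    rw [Gamma0_last_row hp e U, if_neg hy]; simp
  · intro h; exact absurd (Finset.mem_univ _) h

lemma G0_mulVec_idx (hp : 2 < p) (e : ℕ → ℕ) (U : ℕ → ℕ → ℤ) (x : Fin (p ^ 2) → R)
    {k t : ℕ} (hk : k ≤ p) (ht : t < p - 1) :
    (((Gamma0 p e U).map (Int.castRingHom R)).mulVec x) (idxI p hp k t hk ht)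
      = (∑ s : Fin (p - 1), ((eps p ^ e k) ⟨t, ht⟩ s : R) * x (idxI p hp k s hk s.isLt))
        + (U k t : R) * x (lastI p hp) := by
  show ∑ y, ((Gamma0 p e U) (idxI p hp k t hk ht) y : R) * x y = _
  have hsplit : ∀ y : Fin (p ^ 2),
      ((Gamma0 p e U) (idxI p hp k t hk ht) y : R) * x y
        = (if (y : ℕ) / (p - 1) = k then
            ((Gamma0 p e U) (idxI p hp k t hk ht) y : R) * x y else 0)
          + (if y = lastI p hp then (U k t : R) * x y else 0) := by
    intro y
    by_cases hyk : (y : ℕ) / (p - 1) = k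
    · have hylast : y ≠ lastI p hp := by
        intro hh
        have h5 := (div_eq_last_iff hp y).mpr hh
        omega
      rw [if_pos hyk, if_neg hylast, add_zero]
    · rw [if_neg hyk]
      by_cases hyl : y = lastI p hp
      · rw [if_pos hyl, Gamma0_idx_row hp e U hk ht, if_pos hyl, zero_add, hyl]
      · rw [if_neg hyl, Gamma0_idx_row hp e U hk ht, if_neg hyl, if_neg hyk]
        simp
  rw [Finset.sum_congr rfl (fun y _ => hsplit y), Finset.sum_add_distrib]
  congr 1
  · rw [sum_block hp hk _ (fun y hy => if_neg hy)]
    refine Finset.sum_congr rfl (fun s _ => ?_)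
    rw [if_pos (idxI_div hp hk s.isLt), Gamma0_idx_row hp e U hk ht,
      if_neg (by
        intro hh
        have := lastI_div hp
        rw [← hh, idxI_div hp hk s.isLt] at this
        omega),
      if_pos (idxI_div hp hk s.isLt), idxI_mod hp hk s.isLt,
      epsE_eq hp (e k) ht s.isLt]
  · rw [Finset.sum_ite_eq' Finset.univ (lastI p hp) (fun y => (U k t : R) * x y)]
    rw [if_pos (Finset.mem_univ _)]

/-- The `k`-th block of a vector. -/
def blkOf {α : Type*} (hp : 2 < p) (x : Fin (p ^ 2) → α) (k : ℕ) (hk : k ≤ p) :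
    Fin (p - 1) → α :=
  fun t => x (idxI p hp k t hk t.isLt)

lemma G0_mulVec_blk (hp : 2 < p) (e : ℕ → ℕ) (U : ℕ → ℕ → ℤ) (x : Fin (p ^ 2) → R)
    (hx : x (lastI p hp) = 0) {k : ℕ} (hk : k ≤ p) :
    blkOf hp (((Gamma0 p e U).map (Int.castRingHom R)).mulVec x) k hk
      = ((eps p ^ e k).map (Int.castRingHom R)).mulVec (blkOf hp x k hk) := by
  funext t
  show (((Gamma0 p e U).map (Int.castRingHom R)).mulVec x) (idxI p hp k t hk t.isLt) = _
  rw [G0_mulVec_idx hp e U x hk t.isLt, hx, mul_zero, add_zero]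
  show _ = ∑ s, ((eps p ^ e k) t s : R) * blkOf hp x k hk s
  refine Finset.sum_congr rfl (fun s _ => ?_)
  congr

lemma G0_pow_last (hp : 2 < p) (e : ℕ → ℕ) (U : ℕ → ℕ → ℤ) (n : ℕ) (x : Fin (p ^ 2) → R) :
    ((((Gamma0 p e U) ^ n).map (Int.castRingHom R)).mulVec x) (lastI p hp) = x (lastI p hp) := by
  induction n generalizing x with
  | zero =>
    rw [pow_zero, Matrix.map_one _ (by simp) (by simp), Matrix.one_mulVec]
  | succ n ih =>
    rw [pow_succ (Gamma0 p e U) n, Matrix.map_mul, ← Matrix.mulVec_mulVec]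
    rw [ih, G0_mulVec_last hp e U]

lemma G0_pow_blk (hp : 2 < p) (e : ℕ → ℕ) (U : ℕ → ℕ → ℤ) (n : ℕ) (x : Fin (p ^ 2) → R)
    (hx : x (lastI p hp) = 0) {k : ℕ} (hk : k ≤ p) :
    blkOf hp ((((Gamma0 p e U) ^ n).map (Int.castRingHom R)).mulVec x) k hk
      = ((eps p ^ (n * e k)).map (Int.castRingHom R)).mulVec (blkOf hp x k hk) := by
  induction n generalizing x with
  | zero =>
    rw [pow_zero, Matrix.map_one _ (by simp) (by simp), Matrix.one_mulVec,
      Nat.zero_mul, pow_zero, Matrix.map_one _ (by simp) (by simp), Matrix.one_mulVec]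
  | succ n ih =>
    rw [pow_succ (Gamma0 p e U) n, Matrix.map_mul, ← Matrix.mulVec_mulVec]
    rw [ih _ (by rw [G0_mulVec_last hp e U]; exact hx), G0_mulVec_blk hp e U x hx hk,
      Matrix.mulVec_mulVec, ← Matrix.map_mul, ← pow_add,
      show n * e k + e k = (n + 1) * e k by ring]


end Aux2

/-- The canonical embedding `ℤ → ℝ`. -/
abbrev zr : ℤ →+* ℝ := Int.castRingHom ℝ

/-- The `t`-th coordinate of `α = (ε - 1)⁻¹ ∈ ℚ(ε)` with respect to the basis
`{1, ε, …, ε^{p-2}}`, namely `-(p-1-t)/p` (indeed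
`(ε-1)⁻¹ = -(1/p)·∑_{t<p-1} (p-1-t) ε^t`). -/
noncomputable def alphaCoord (p t : ℕ) : ℝ := -(((p - 1 - t : ℕ) : ℝ) / (p : ℝ))

/-- The vector `X ∈ ℚ^{p²}`: condensed blocks `1, …, p` are zero, block `p+1` is `⟨α⟩` and
the final scalar coordinate is `0`. -/
noncomputable def Xvec (p : ℕ) : Fin (p ^ 2) → ℝ := fun x =>
  if (x : ℕ) / (p - 1) = p then alphaCoord p ((x : ℕ) % (p - 1)) else 0

/-- The vector `Y ∈ ℚ^{p²}`: condensed blocks `1, …, p` are all `⟨α⟩`, block `p+1` is zero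
and the final scalar coordinate is `0`. -/
noncomputable def Yvec (p : ℕ) : Fin (p ^ 2) → ℝ := fun x =>
  if (x : ℕ) / (p - 1) < p then alphaCoord p ((x : ℕ) % (p - 1)) else 0

section Aux3
open Finset

variable {p : ℕ}

lemma map_int_id {m : Type*} (M : Matrix m m ℤ) : M.map (Int.castRingHom ℤ) = M := by
  ext i j; simp

lemma map_pow' {m : Type*} [Fintype m] [DecidableEq m] {S : Type*} [CommRing S]
    (φ : ℤ →+* S) (M : Matrix m m ℤ) (k : ℕ) : (M ^ k).map φ = (M.map φ) ^ k := by
  simpa [RingHom.mapMatrix_apply] using map_pow φ.mapMatrix M k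

lemma eps_pow_p (hp : 2 < p) (h : (Gamma0a p) ^ p = 1) : eps p ^ p = 1 := by
  have key : ∀ w : Fin (p - 1) → ℤ, (eps p ^ p).mulVec w = w := by
    intro w
    set x : Fin (p ^ 2) → ℤ := fun u =>
      if hu : (u : ℕ) / (p - 1) = 0 then w ⟨(u : ℕ) % (p - 1), Nat.mod_lt _ (pm1_pos hp)⟩
      else 0 with hx
    have hk0 : (0 : ℕ) ≤ p := Nat.zero_le p
    have hxlast : x (lastI p hp) = 0 := by
      rw [hx]
      exact dif_neg (by rw [lastI_div hp]; omega)
    have hblk : blkOf hp x 0 hk0 = w := by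
      funext t
      show x (idxI p hp 0 t hk0 t.isLt) = w t
      simp only [hx]
      rw [dif_pos (idxI_div hp hk0 t.isLt)]
      congr 1
      exact Fin.ext (idxI_mod hp hk0 t.isLt)
    have h2 := G0_pow_blk (R := ℤ) hp (ea p) (Ua p) p x hxlast hk0
    rw [show Gamma0 p (ea p) (Ua p) = Gamma0a p from rfl, h,
      Matrix.map_one _ (by simp) (by simp), Matrix.one_mulVec, hblk,
      show ea p 0 = 1 from if_neg (by omega), mul_one, map_int_id] at h2
    exact h2.symm
  ext t s
  have h3 := congrFun (key (Pi.single s 1)) t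
  rw [Matrix.mulVec_single_one, Matrix.col_apply] at h3
  rw [h3, Pi.single_apply, Matrix.one_apply]

/-- Partial geometric sums of `eps`-powers. -/
def Cmat (p e' n : ℕ) : Matrix (Fin (p - 1)) (Fin (p - 1)) ℤ :=
  ∑ m ∈ Finset.range n, eps p ^ (m * e')

lemma Cmat_succ (e' n : ℕ) : Cmat p e' (n + 1) = eps p ^ e' * Cmat p e' n + 1 := by
  unfold Cmat
  rw [Finset.sum_range_succ']
  congr 1
  · rw [Finset.mul_sum]
    refine Finset.sum_congr rfl (fun m _ => ?_)
    rw [← pow_add]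
    congr 1
    ring
  · norm_num

/-- The coordinate vector of `α`. -/
noncomputable def alphaB (p : ℕ) : Fin (p - 1) → ℝ := fun t => alphaCoord p t

lemma Xvec_last (hp : 2 < p) : Xvec p (lastI p hp) = 0 := by
  show (if ((lastI p hp : ℕ)) / (p - 1) = p then _ else 0) = 0
  rw [if_neg (by rw [lastI_div hp]; omega)]

lemma Yvec_last (hp : 2 < p) : Yvec p (lastI p hp) = 0 := by
  show (if ((lastI p hp : ℕ)) / (p - 1) < p then _ else 0) = 0
  rw [if_neg (by rw [lastI_div hp]; omega)]

lemma Xvec_blk_ne (hp : 2 < p) {k : ℕ} (hk : k ≤ p) (hne : k ≠ p) :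
    blkOf hp (Xvec p) k hk = 0 := by
  funext t
  show (if ((idxI p hp k t hk t.isLt : ℕ)) / (p - 1) = p then _ else 0) = 0
  rw [if_neg (by rw [idxI_div hp hk t.isLt]; exact hne)]

lemma Xvec_blk_p (hp : 2 < p) : blkOf hp (Xvec p) p le_rfl = alphaB p := by
  funext t
  show (if ((idxI p hp p t le_rfl t.isLt : ℕ)) / (p - 1) = p then
      alphaCoord p ((idxI p hp p t le_rfl t.isLt : ℕ) % (p - 1)) else 0) = alphaB p t
  rw [if_pos (idxI_div hp le_rfl t.isLt), idxI_mod hp le_rfl t.isLt]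
  rfl

lemma Yvec_blk_lt (hp : 2 < p) {k : ℕ} (hk : k < p) :
    blkOf hp (Yvec p) k (le_of_lt hk) = alphaB p := by
  funext t
  show (if ((idxI p hp k t (le_of_lt hk) t.isLt : ℕ)) / (p - 1) < p then
      alphaCoord p ((idxI p hp k t (le_of_lt hk) t.isLt : ℕ) % (p - 1)) else 0) = alphaB p t
  rw [idxI_div hp (le_of_lt hk) t.isLt, if_pos hk, idxI_mod hp (le_of_lt hk) t.isLt]
  rfl

lemma blkOf_add (hp : 2 < p) (x y : Fin (p ^ 2) → ℝ) {k : ℕ} (hk : k ≤ p) :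
    blkOf hp (x + y) k hk = blkOf hp x k hk + blkOf hp y k hk := rfl

/-- Cocycle partial sums for `a`. -/
noncomputable def SaV (p : ℕ) : ℕ → (Fin (p ^ 2) → ℝ)
  | 0 => 0
  | n + 1 => ((Gamma0a p).map (Int.castRingHom ℝ)).mulVec (SaV p n) + Xvec p

/-- Cocycle partial sums for `b`. -/
noncomputable def SbV (p : ℕ) : ℕ → (Fin (p ^ 2) → ℝ)
  | 0 => 0
  | n + 1 => ((Gamma0b p).map (Int.castRingHom ℝ)).mulVec (SbV p n) + Yvec p

lemma SaV_last (hp : 2 < p) (n : ℕ) : SaV p n (lastI p hp) = 0 := by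
  induction n with
  | zero => rfl
  | succ n ih =>
    show (((Gamma0a p).map (Int.castRingHom ℝ)).mulVec (SaV p n) + Xvec p) (lastI p hp) = 0
    rw [Pi.add_apply, show Gamma0a p = Gamma0 p (ea p) (Ua p) from rfl,
      G0_mulVec_last hp (ea p) (Ua p), ih, Xvec_last hp, add_zero]

lemma SbV_last (hp : 2 < p) (n : ℕ) : SbV p n (lastI p hp) = 0 := by
  induction n with
  | zero => rfl
  | succ n ih =>
    show (((Gamma0b p).map (Int.castRingHom ℝ)).mulVec (SbV p n) + Yvec p) (lastI p hp) = 0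
    rw [Pi.add_apply, show Gamma0b p = Gamma0 p (eb p) (Ub p) from rfl,
      G0_mulVec_last hp (eb p) (Ub p), ih, Yvec_last hp, add_zero]

lemma SaV_blk_lt (hp : 2 < p) (n : ℕ) {k : ℕ} (hk : k < p) :
    blkOf hp (SaV p n) k (le_of_lt hk) = 0 := by
  induction n with
  | zero => rfl
  | succ n ih =>
    show blkOf hp (((Gamma0a p).map (Int.castRingHom ℝ)).mulVec (SaV p n) + Xvec p) k _ = 0
    rw [blkOf_add, show Gamma0a p = Gamma0 p (ea p) (Ua p) from rfl,
      G0_mulVec_blk hp (ea p) (Ua p) _ (SaV_last hp n) (le_of_lt hk), ih,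
      Matrix.mulVec_zero, Xvec_blk_ne hp (le_of_lt hk) (Nat.ne_of_lt hk), add_zero]

lemma SaV_blk_p (hp : 2 < p) (n : ℕ) :
    blkOf hp (SaV p n) p le_rfl = (n : ℝ) • alphaB p := by
  induction n with
  | zero => show (0 : Fin (p-1) → ℝ) = _ ; simp
  | succ n ih =>
    show blkOf hp (((Gamma0a p).map (Int.castRingHom ℝ)).mulVec (SaV p n) + Xvec p) p _ = _
    rw [blkOf_add, show Gamma0a p = Gamma0 p (ea p) (Ua p) from rfl,
      G0_mulVec_blk hp (ea p) (Ua p) _ (SaV_last hp n) le_rfl, ih,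
      show ea p p = 0 from if_pos rfl, pow_zero, Matrix.map_one _ (by simp) (by simp),
      Matrix.one_mulVec, Xvec_blk_p hp]
    push_cast
    rw [add_smul, one_smul]

lemma SbV_blk (hp : 2 < p) (n : ℕ) {k : ℕ} (hk : k < p) :
    blkOf hp (SbV p n) k (le_of_lt hk)
      = ((Cmat p (eb p k) n).map (Int.castRingHom ℝ)).mulVec (alphaB p) := by
  induction n with
  | zero =>
    show (0 : Fin (p-1) → ℝ) = _
    unfold Cmat
    rw [Finset.range_zero, Finset.sum_empty,
      show (0 : Matrix (Fin (p-1)) (Fin (p-1)) ℤ).map (Int.castRingHom ℝ) = 0 from by ext; simp,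
      Matrix.zero_mulVec]
  | succ n ih =>
    show blkOf hp (((Gamma0b p).map (Int.castRingHom ℝ)).mulVec (SbV p n) + Yvec p) k _ = _
    rw [blkOf_add, show Gamma0b p = Gamma0 p (eb p) (Ub p) from rfl,
      G0_mulVec_blk hp (eb p) (Ub p) _ (SbV_last hp n) (le_of_lt hk), ih,
      Yvec_blk_lt hp hk, Matrix.mulVec_mulVec, ← Matrix.map_mul, Cmat_succ,
      Matrix.map_add _ (by push_cast; intro a b; norm_num) _ _, Matrix.add_mulVec,
      Matrix.map_one _ (by simp) (by simp), Matrix.one_mulVec]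

end Aux3
section Aux4
open Finset

variable {p : ℕ}

lemma sd_pow_grp {K F G : Type*} [CommRing K] [Field F] [Group G] (φ : K →+* F) {d : ℕ}
    (ρ : G →* Matrix.GeneralLinearGroup (Fin d) K) (c : GenCrys.SD φ ρ) (n : ℕ) :
    (c ^ n).grp = c.grp ^ n := by
  induction n with
  | zero => rw [pow_zero, pow_zero]; rfl
  | succ n ih => rw [pow_succ, pow_succ, GenCrys.SD.mul_grp, ih]

lemma sd_pow_vec {K F G : Type*} [CommRing K] [Field F] [Group G] (φ : K →+* F) {d : ℕ}
    (ρ : G →* Matrix.GeneralLinearGroup (Fin d) K) (c : GenCrys.SD φ ρ) (n : ℕ) :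
    (c ^ n).vec = ∑ m ∈ Finset.range n, GenCrys.SD.act φ ρ (c.grp ^ m) c.vec := by
  induction n with
  | zero => rw [pow_zero, Finset.range_zero, Finset.sum_empty]; rfl
  | succ n ih =>
    rw [pow_succ, GenCrys.SD.mul_vec, ih, Finset.sum_range_succ, sd_pow_grp]

lemma smul_one_unit {m : Type*} [Fintype m] [DecidableEq m] {F : Type*} [Field F] {a : F}
    (ha : a ≠ 0) : IsUnit (a • (1 : Matrix m m F)) := by
  refine IsUnit.of_mul_eq_one (a⁻¹ • (1 : Matrix m m F)) ?_
  rw [Matrix.smul_mul, one_mul, smul_smul, mul_inv_cancel₀ ha, one_smul]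

lemma cbar_unit (hp : 2 < p) (hP : p.Prime) (heps : eps p ^ p = 1) (i' e' : ℕ)
    {j0 : ZMod p} (hj : j0 ≠ 0) :
    IsUnit ((eps p ^ i' * Cmat p e' j0.val).map (Int.castRingHom (ZMod p))) := by
  haveI : Fact p.Prime := ⟨hP⟩
  haveI : Nonempty (Fin (p - 1)) := ⟨⟨0, by omega⟩⟩
  set A := (eps p).map (Int.castRingHom (ZMod p)) with hA
  have hmp : ∀ n : ℕ, (eps p ^ n).map (Int.castRingHom (ZMod p)) = A ^ n :=
    fun n => map_pow' _ _ n
  have hAp : A ^ p = 1 := by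
    rw [← hmp, heps, Matrix.map_one _ (by simp) (by simp)]
  have hAunit : IsUnit A := by
    refine IsUnit.of_mul_eq_one (A ^ (p - 1)) ?_
    rw [← pow_succ' A (p - 1), show p - 1 + 1 = p from by omega, hAp]
  rw [Matrix.map_mul, hmp]
  refine (hAunit.pow i').mul ?_
  have hCbar : (Cmat p e' j0.val).map (Int.castRingHom (ZMod p))
      = ∑ m ∈ Finset.range j0.val, A ^ (m * e') := by
    unfold Cmat
    have h0 := map_sum (RingHom.mapMatrix (Int.castRingHom (ZMod p)))
      (fun m => eps p ^ (m * e')) (Finset.range j0.val)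
    simp only [RingHom.mapMatrix_apply] at h0
    rw [h0]
    exact Finset.sum_congr rfl (fun m _ => hmp _)
  rw [hCbar]
  set N := A - 1 with hN
  have hNp : N ^ p = 0 := by
    rw [hN, sub_pow_char_of_commute _ (Commute.one_right A), hAp, one_pow, sub_self]
  set D := ∑ m ∈ Finset.range j0.val, (∑ r ∈ Finset.range (m * e'), A ^ r) with hD
  have hsum : ∑ m ∈ Finset.range j0.val, A ^ (m * e')
      = j0 • (1 : Matrix (Fin (p - 1)) (Fin (p - 1)) (ZMod p)) + D * N := by
    have h1 : ∀ m : ℕ, A ^ (m * e')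
        = 1 + (∑ r ∈ Finset.range (m * e'), A ^ r) * N := by
      intro m
      rw [hN, geom_sum_mul]
      abel
    rw [Finset.sum_congr rfl (fun m _ => h1 m), Finset.sum_add_distrib, Finset.sum_const,
      Finset.card_range, hD, Finset.sum_mul]
    congr 1
    rw [← Nat.cast_smul_eq_nsmul (ZMod p), ZMod.natCast_val, ZMod.cast_id]
  rw [hsum]
  have hDA : Commute D A :=
    Commute.sum_left _ _ _ (fun m _ => Commute.sum_left _ _ _
      (fun r _ => (Commute.refl A).pow_left r))
  have hDN : Commute D N := hDA.sub_right (Commute.one_right D)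
  have hnil : IsNilpotent (D * N) := ⟨p, by rw [hDN.mul_pow, hNp, mul_zero]⟩
  have hunit : IsUnit (j0 • (1 : Matrix (Fin (p - 1)) (Fin (p - 1)) (ZMod p))) :=
    smul_one_unit hj
  exact IsNilpotent.isUnit_add_left_of_commute hnil hunit
    (Commute.smul_right (Commute.one_right _) j0)

lemma alpha_not_int (hp : 2 < p) (hP : p.Prime) (M : Matrix (Fin (p - 1)) (Fin (p - 1)) ℤ)
    (hM : IsUnit (M.map (Int.castRingHom (ZMod p))))
    (hint : ∀ t : Fin (p - 1), ∃ m : ℤ,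
      ((M.map (Int.castRingHom ℝ)).mulVec (alphaB p)) t = (m : ℝ)) : False := by
  haveI : Fact p.Prime := ⟨hP⟩
  set u0 : Fin (p - 1) → ℤ := fun t => -((p - 1 - (t : ℕ) : ℕ) : ℤ) with hu0
  have hrel : ∀ t, ((M.map (Int.castRingHom ℝ)).mulVec (alphaB p)) t
      = ((M.mulVec u0) t : ℝ) / p := by
    intro t
    have h1 : ((M.mulVec u0) t : ℝ) = ∑ s, (M t s : ℝ) * (u0 s : ℝ) := by
      show ((∑ s, M t s * u0 s : ℤ) : ℝ) = _
      push_cast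
      rfl
    rw [h1, Finset.sum_div]
    show ∑ s, ((M t s : ℤ) : ℝ) * alphaB p s = _
    refine Finset.sum_congr rfl (fun s _ => ?_)
    show (M t s : ℝ) * alphaCoord p (s : ℕ) = _
    rw [hu0, alphaCoord]
    push_cast
    ring
  have hp0 : (p : ℝ) ≠ 0 := by positivity
  have hdvd : ∀ t, (p : ℤ) ∣ (M.mulVec u0) t := by
    intro t
    obtain ⟨m, hm⟩ := hint t
    rw [hrel t] at hm
    refine ⟨m, ?_⟩
    have h2 : ((M.mulVec u0) t : ℝ) = ((p : ℤ) * m : ℤ) := by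
      push_cast
      field_simp at hm
      linarith [hm]
    exact_mod_cast h2
  have hzero : (M.map (Int.castRingHom (ZMod p))).mulVec
      (fun s => ((u0 s : ℤ) : ZMod p)) = 0 := by
    funext t
    have h1 : ((M.map (Int.castRingHom (ZMod p))).mulVec fun s => ((u0 s : ℤ) : ZMod p)) t
        = (((M.mulVec u0) t : ℤ) : ZMod p) := by
      show ∑ s, ((M t s : ℤ) : ZMod p) * ((u0 s : ℤ) : ZMod p)
        = ((∑ s, M t s * u0 s : ℤ) : ZMod p)
      push_cast
      rfl
    rw [h1]
    show _ = (0 : ZMod p)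
    exact (ZMod.intCast_zmod_eq_zero_iff_dvd _ p).mpr (hdvd t)
  obtain ⟨v, hv⟩ := hM
  have h3 : (fun s => ((u0 s : ℤ) : ZMod p)) = (0 : Fin (p - 1) → ZMod p) := by
    calc (fun s => ((u0 s : ℤ) : ZMod p))
        = (1 : Matrix (Fin (p - 1)) (Fin (p - 1)) (ZMod p)).mulVec
            (fun s => ((u0 s : ℤ) : ZMod p)) := (Matrix.one_mulVec _).symm
      _ = ((↑v⁻¹ * ↑v : Matrix (Fin (p - 1)) (Fin (p - 1)) (ZMod p))).mulVec
            (fun s => ((u0 s : ℤ) : ZMod p)) := by rw [Units.inv_mul]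
      _ = (↑v⁻¹ : Matrix (Fin (p - 1)) (Fin (p - 1)) (ZMod p)).mulVec
            ((↑v : Matrix (Fin (p - 1)) (Fin (p - 1)) (ZMod p)).mulVec
              (fun s => ((u0 s : ℤ) : ZMod p))) := (Matrix.mulVec_mulVec _ _ _).symm
      _ = (↑v⁻¹ : Matrix (Fin (p - 1)) (Fin (p - 1)) (ZMod p)).mulVec 0 := by
            rw [hv, hzero]
      _ = 0 := Matrix.mulVec_zero _
  have h4 := congrFun h3 ⟨0, by omega⟩
  simp only [hu0, Pi.zero_apply, Int.cast_neg, neg_eq_zero] at h4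
  have h5 : ((p - 1 : ℕ) : ZMod p) = 0 := by
    exact_mod_cast h4
  have h7 : p ∣ p - 1 := (ZMod.natCast_eq_zero_iff _ p).mp h5
  have h8 := Nat.le_of_dvd (by omega) h7
  omega

lemma ofAdd_decomp (hp : 2 < p) (i j : ZMod p) :
    Multiplicative.ofAdd ((i, j) : ZMod p × ZMod p)
      = Multiplicative.ofAdd ((1 : ZMod p), (0 : ZMod p)) ^ i.val
        * Multiplicative.ofAdd ((0 : ZMod p), (1 : ZMod p)) ^ j.val := by
  haveI : NeZero p := ⟨by omega⟩
  rw [← ofAdd_nsmul, ← ofAdd_nsmul, ← ofAdd_add]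
  congr 1
  have h1 : i.val • ((1 : ZMod p), (0 : ZMod p)) = (i, (0 : ZMod p)) := by
    rw [Prod.smul_mk, smul_zero, nsmul_eq_mul, mul_one, ZMod.natCast_val, ZMod.cast_id]
  have h2 : j.val • ((0 : ZMod p), (1 : ZMod p)) = ((0 : ZMod p), j) := by
    rw [Prod.smul_mk, smul_zero, nsmul_eq_mul, mul_one, ZMod.natCast_val, ZMod.cast_id]
  rw [h1, h2, Prod.mk_add_mk, add_zero, zero_add]

lemma pow_p_eq_one (hp : 2 < p) (g : Multiplicative (ZMod p × ZMod p)) : g ^ p = 1 := by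
  haveI : NeZero p := ⟨by omega⟩
  have h1 : Multiplicative.toAdd (g ^ p) = 0 := by
    rw [toAdd_pow]
    have : p • Multiplicative.toAdd g
        = ((p : ZMod p) * (Multiplicative.toAdd g).1, (p : ZMod p) * (Multiplicative.toAdd g).2) := by
      rw [Prod.smul_def, nsmul_eq_mul, nsmul_eq_mul]
    rw [this, ZMod.natCast_self, zero_mul, zero_mul]
    rfl
  exact h1

end Aux4
/-- **Corollary 1.** Let `p > 2` be a prime and let `G = ⟨a,b⟩ ≅ C_p × C_p` act on `ℝ^{p²}`
via `Γ₀`.  For every 1-cocycle `f` with `f(a) = X + ℤ^{p²}` and `f(b) = Y + ℤ^{p²}`, the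
generalized crystallographic group `Crys(G; Γ₀; f)` is torsion free. -/
theorem crys_gamma0_torsionFree (p : ℕ) (hp : p.Prime) (hodd : 2 < p)
    (ρ : Multiplicative (ZMod p × ZMod p) →* Matrix.GeneralLinearGroup (Fin (p ^ 2)) ℤ)
    (hρa : (ρ (Multiplicative.ofAdd (1, 0)) : Matrix (Fin (p ^ 2)) (Fin (p ^ 2)) ℤ) =
      Gamma0a p)
    (hρb : (ρ (Multiplicative.ofAdd (0, 1)) : Matrix (Fin (p ^ 2)) (Fin (p ^ 2)) ℤ) =
      Gamma0b p)
    (f : Multiplicative (ZMod p × ZMod p) → Torus zr (p ^ 2))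
    (hf : IsCocycle zr ρ f)
    (hfa : f (Multiplicative.ofAdd (1, 0)) = mkT zr (Xvec p))
    (hfb : f (Multiplicative.ofAdd (0, 1)) = mkT zr (Yvec p)) :
    CrysTorsionFree zr ρ f := by
  haveI hPfact : Fact p.Prime := ⟨hp⟩
  haveI : NeZero p := ⟨by omega⟩
  intro c hmem hne hfin
  have hmemT : mkT zr c.vec = f c.grp := hmem
  obtain ⟨z, hz⟩ : ∃ z, Multiplicative.toAdd c.grp = z := ⟨_, rfl⟩
  obtain ⟨i, j⟩ := z
  have hgd : c.grp = Multiplicative.ofAdd (i, j) := by rw [← hz]; rfl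
  have hgdec : c.grp = Multiplicative.ofAdd ((1 : ZMod p), (0 : ZMod p)) ^ i.val
      * Multiplicative.ofAdd ((0 : ZMod p), (1 : ZMod p)) ^ j.val := by
    rw [hgd, ofAdd_decomp hodd i j]
  -- matrices of ρ
  have hmatg : ∀ (i' j' : ZMod p),
      ((ρ (Multiplicative.ofAdd (i', j')) : Matrix (Fin (p ^ 2)) (Fin (p ^ 2)) ℤ))
        = Gamma0a p ^ i'.val * Gamma0b p ^ j'.val := by
    intro i' j'
    rw [ofAdd_decomp hodd i' j', _root_.map_mul, _root_.map_pow, _root_.map_pow, Units.val_mul,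
      Units.val_pow_eq_pow_val, Units.val_pow_eq_pow_val, hρa, hρb]
  -- `Γa^p = 1` and `eps^p = 1`
  have hGa : (Gamma0a p) ^ p = 1 := by
    have h1 : (ρ (Multiplicative.ofAdd ((1 : ZMod p), (0 : ZMod p)))) ^ p = 1 := by
      rw [← _root_.map_pow, pow_p_eq_one hodd, _root_.map_one]
    calc (Gamma0a p) ^ p
        = ((ρ (Multiplicative.ofAdd ((1 : ZMod p), (0 : ZMod p)))
            : Matrix (Fin (p ^ 2)) (Fin (p ^ 2)) ℤ)) ^ p := by rw [hρa]
      _ = (((ρ (Multiplicative.ofAdd ((1 : ZMod p), (0 : ZMod p)))) ^ p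
            : Matrix.GeneralLinearGroup (Fin (p ^ 2)) ℤ) : Matrix (Fin (p ^ 2)) (Fin (p ^ 2)) ℤ) :=
          (Units.val_pow_eq_pow_val _ _).symm
      _ = 1 := by rw [h1]; rfl
  have heps : eps p ^ p = 1 := eps_pow_p hodd hGa
  -- torsion gives `(c^p).vec = 0`
  obtain ⟨n, hn0, hcn⟩ := isOfFinOrder_iff_pow_eq_one.mp hfin
  have hgrp_p : (c ^ p).grp = 1 := by rw [sd_pow_grp, pow_p_eq_one hodd]
  have hvec_eq : ((c ^ p) ^ n).vec = (n : ℝ) • (c ^ p).vec := by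
    rw [sd_pow_vec]
    rw [Finset.sum_congr rfl (fun m _ => by rw [hgrp_p, one_pow, SD.act_one]),
      Finset.sum_const, Finset.card_range]
    funext u
    simp [Pi.smul_apply, nsmul_eq_mul]
  have hcpn : (c ^ p) ^ n = 1 := by
    rw [← pow_mul, mul_comm, pow_mul, hcn, one_pow]
  have hv0 : (c ^ p).vec = 0 := by
    have h2 : (n : ℝ) • (c ^ p).vec = 0 := by
      rw [← hvec_eq, hcpn]; rfl
    have hn' : (n : ℝ) ≠ 0 := Nat.cast_ne_zero.mpr (by omega)
    exact (smul_eq_zero.mp h2).resolve_left hn'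
  -- case `c.grp = 1`
  by_cases hg1 : c.grp = 1
  · have h3 : (c ^ p).vec = (p : ℝ) • c.vec := by
      rw [sd_pow_vec]
      rw [Finset.sum_congr rfl (fun m _ => by rw [hg1, one_pow, SD.act_one]),
        Finset.sum_const, Finset.card_range]
      funext u
      simp [Pi.smul_apply, nsmul_eq_mul]
    have h4 : c.vec = 0 := by
      have h5 : (p : ℝ) • c.vec = 0 := by rw [← h3]; exact hv0
      have hp' : (p : ℝ) ≠ 0 := Nat.cast_ne_zero.mpr (by omega)
      exact (smul_eq_zero.mp h5).resolve_left hp'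
    apply hne
    ext1
    · rw [h4]; rfl
    · rw [hg1]; rfl
  -- main case
  have hij : ¬(i = 0 ∧ j = 0) := by
    rintro ⟨h1, h2⟩
    apply hg1
    rw [hgd, h1, h2]
    rfl
  have hvsum : ∀ u, ∑ m ∈ Finset.range p, (SD.act zr ρ (c.grp ^ m) c.vec) u = 0 := by
    intro u
    have h0 : (∑ m ∈ Finset.range p, SD.act zr ρ (c.grp ^ m) c.vec) = 0 := by
      rw [← sd_pow_vec]; exact hv0
    calc ∑ m ∈ Finset.range p, (SD.act zr ρ (c.grp ^ m) c.vec) u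
        = (∑ m ∈ Finset.range p, SD.act zr ρ (c.grp ^ m) c.vec) u :=
          (Finset.sum_apply u _ _).symm
      _ = 0 := by rw [h0]; rfl
  have hact : ∀ (m : ℕ), SD.act zr ρ (c.grp ^ m) c.vec
      = ((Gamma0a p ^ (m • i).val * Gamma0b p ^ (m • j).val).map zr).mulVec c.vec := by
    intro m
    have h1 : c.grp ^ m = Multiplicative.ofAdd (m • i, m • j) := by
      rw [hgd, ← ofAdd_nsmul, Prod.smul_mk]
    rw [h1]
    show ((ρ (Multiplicative.ofAdd (m • i, m • j)) : Matrix (Fin (p ^ 2)) (Fin (p ^ 2)) ℤ).map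
      zr).mulVec c.vec = _
    rw [hmatg]
  have hlast : c.vec (lastI p hodd) = 0 := by
    have h0 := hvsum (lastI p hodd)
    have h1 : ∀ m ∈ Finset.range p,
        (SD.act zr ρ (c.grp ^ m) c.vec) (lastI p hodd) = c.vec (lastI p hodd) := by
      intro m _
      rw [hact m, Matrix.map_mul, ← Matrix.mulVec_mulVec,
        show Gamma0a p = Gamma0 p (ea p) (Ua p) from rfl,
        show Gamma0b p = Gamma0 p (eb p) (Ub p) from rfl,
        G0_pow_last hodd (ea p) (Ua p), G0_pow_last hodd (eb p) (Ub p)]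
    rw [Finset.sum_congr rfl h1, Finset.sum_const, Finset.card_range, nsmul_eq_mul] at h0
    have hpne : (p : ℝ) ≠ 0 := Nat.cast_ne_zero.mpr (by omega)
    rcases mul_eq_zero.mp h0 with h | h
    · exact absurd h hpne
    · exact h
  have hblkzero : ∀ (k : ℕ) (hk : k ≤ p),
      (∀ m : ℕ, p ∣ ((m • i).val * ea p k + (m • j).val * eb p k)) →
      blkOf hodd c.vec k hk = 0 := by
    intro k hk hdvd
    have hmblk : ∀ m : ℕ,
        blkOf hodd (SD.act zr ρ (c.grp ^ m) c.vec) k hk = blkOf hodd c.vec k hk := by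
      intro m
      rw [hact m, Matrix.map_mul, ← Matrix.mulVec_mulVec,
        show Gamma0a p = Gamma0 p (ea p) (Ua p) from rfl,
        show Gamma0b p = Gamma0 p (eb p) (Ub p) from rfl]
      have hblast : ((((Gamma0 p (eb p) (Ub p)) ^ (m • j).val).map zr).mulVec c.vec)
          (lastI p hodd) = 0 := by
        rw [G0_pow_last hodd (eb p) (Ub p)]; exact hlast
      rw [G0_pow_blk hodd (ea p) (Ua p) ((m • i).val) _ hblast hk,
        G0_pow_blk hodd (eb p) (Ub p) ((m • j).val) _ hlast hk,
        Matrix.mulVec_mulVec, ← Matrix.map_mul, ← pow_add]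
      obtain ⟨q, hq⟩ := hdvd m
      rw [hq, pow_mul, heps, one_pow, Matrix.map_one _ (by simp) (by simp), Matrix.one_mulVec]
    funext t
    have h0 := hvsum (idxI p hodd k t hk t.isLt)
    have h1 : ∀ m ∈ Finset.range p,
        (SD.act zr ρ (c.grp ^ m) c.vec) (idxI p hodd k t hk t.isLt)
          = c.vec (idxI p hodd k t hk t.isLt) := by
      intro m _
      exact congrFun (hmblk m) t
    rw [Finset.sum_congr rfl h1, Finset.sum_const, Finset.card_range, nsmul_eq_mul] at h0
    have hpne : (p : ℝ) ≠ 0 := Nat.cast_ne_zero.mpr (by omega)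
    show c.vec (idxI p hodd k t hk t.isLt) = 0
    rcases mul_eq_zero.mp h0 with h | h
    · exact absurd h hpne
    · exact h
  -- the cocycle values
  have hfa_pow : ∀ n' : ℕ,
      f (Multiplicative.ofAdd ((1 : ZMod p), (0 : ZMod p)) ^ n') = mkT zr (SaV p n') := by
    intro n'
    induction n' with
    | zero =>
      rw [pow_zero, cocycle_map_one zr ρ hf]
      exact (_root_.map_zero (mkT zr)).symm
    | succ n' ih =>
      rw [pow_succ' (Multiplicative.ofAdd ((1 : ZMod p), (0 : ZMod p))) n',
        hf (Multiplicative.ofAdd ((1 : ZMod p), (0 : ZMod p))) _, ih, hfa, torusMap_mk,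
        hρa, ← _root_.map_add]
      rfl
  have hfb_pow : ∀ n' : ℕ,
      f (Multiplicative.ofAdd ((0 : ZMod p), (1 : ZMod p)) ^ n') = mkT zr (SbV p n') := by
    intro n'
    induction n' with
    | zero =>
      rw [pow_zero, cocycle_map_one zr ρ hf]
      exact (_root_.map_zero (mkT zr)).symm
    | succ n' ih =>
      rw [pow_succ' (Multiplicative.ofAdd ((0 : ZMod p), (1 : ZMod p))) n',
        hf (Multiplicative.ofAdd ((0 : ZMod p), (1 : ZMod p))) _, ih, hfb, torusMap_mk,
        hρb, ← _root_.map_add]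
      rfl
  have hρpow : ((ρ (Multiplicative.ofAdd ((1 : ZMod p), (0 : ZMod p)) ^ i.val))
      : Matrix (Fin (p ^ 2)) (Fin (p ^ 2)) ℤ) = Gamma0a p ^ i.val := by
    rw [_root_.map_pow, Units.val_pow_eq_pow_val, hρa]
  have hfg : f c.grp
      = mkT zr (((Gamma0a p ^ i.val).map zr).mulVec (SbV p j.val) + SaV p i.val) := by
    rw [hgdec, hf _ _, hfb_pow, hfa_pow, torusMap_mk, hρpow, ← _root_.map_add]
  have hlat : ∀ u, ∃ m : ℤ,
      (((Gamma0a p ^ i.val).map zr).mulVec (SbV p j.val) + SaV p i.val) u - c.vec u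
        = (m : ℝ) := by
    have h1 : mkT zr c.vec
        = mkT zr (((Gamma0a p ^ i.val).map zr).mulVec (SbV p j.val) + SaV p i.val) :=
      hmemT.trans hfg
    obtain ⟨z, hz1, hz2⟩ := (QuotientAddGroup.mk'_eq_mk' (latt zr (p ^ 2))).mp h1
    intro u
    obtain ⟨m, hm⟩ := hz1 u
    refine ⟨m, ?_⟩
    rw [← hz2, Pi.add_apply, hm]
    show c.vec u + (m : ℝ) - c.vec u = (m : ℝ)
    ring
  by_cases hj0 : j = 0
  · -- `j = 0`, use block `p`
    have hi0 : i ≠ 0 := fun h => hij ⟨h, hj0⟩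
    have hz := hblkzero p le_rfl (by
      intro m
      rw [hj0, smul_zero, ZMod.val_zero, show ea p p = 0 from if_pos rfl]
      simp)
    have h0lt : 0 < p - 1 := by omega
    let t0 : Fin (p - 1) := ⟨0, h0lt⟩
    obtain ⟨m, hm⟩ := hlat (idxI p hodd p t0 le_rfl t0.isLt)
    have hcv : c.vec (idxI p hodd p t0 le_rfl t0.isLt) = 0 := congrFun hz t0
    have hSb : SbV p j.val = 0 := by rw [hj0, ZMod.val_zero]; rfl
    have hSa : SaV p i.val (idxI p hodd p t0 le_rfl t0.isLt)
        = (i.val : ℝ) • alphaB p t0 := congrFun (SaV_blk_p hodd i.val) t0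
    rw [Pi.add_apply, hSb, Matrix.mulVec_zero, Pi.zero_apply, zero_add, hSa, hcv,
      sub_zero] at hm
    -- hm : (i.val : ℝ) • alphaB p t0 = m
    have ht0 : alphaB p t0 = -(((p - 1 : ℕ) : ℝ) / p) := rfl
    have hpne : (p : ℝ) ≠ 0 := Nat.cast_ne_zero.mpr (by omega)
    have hc1 : ((p - 1 : ℕ) : ℝ) = (p : ℝ) - 1 := by
      rw [Nat.cast_sub (by omega : 1 ≤ p), Nat.cast_one]
    rw [ht0, smul_eq_mul, hc1] at hm
    obtain ⟨w, hw⟩ : ∃ w : ℝ, w = (i.val : ℝ) := ⟨_, rfl⟩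
    rw [← hw] at hm
    have h2 : w * ((p : ℝ) - 1) = -(m : ℝ) * (p : ℝ) := by
      field_simp at hm
      ring_nf at hm ⊢
      linarith
    have hinteq : ((i.val * (p - 1) : ℕ) : ℤ) = -m * p := by
      have h4 : ((i.val * (p - 1) : ℕ) : ℝ) = ((-m * p : ℤ) : ℝ) := by
        rw [Nat.cast_mul, hc1, ← hw]
        push_cast
        linarith
      exact_mod_cast h4
    have hdvd : (p : ℤ) ∣ ((i.val * (p - 1) : ℕ) : ℤ) := ⟨-m, by rw [hinteq]; ring⟩
    have hdvdn : p ∣ i.val * (p - 1) := Int.natCast_dvd_natCast.mp hdvd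
    rcases (Nat.Prime.dvd_mul hp).mp hdvdn with h | h
    · have h1 : i.val < p := ZMod.val_lt i
      have h2 : i.val ≠ 0 := fun hh => hi0 ((ZMod.val_eq_zero i).mp hh)
      have := Nat.le_of_dvd (by omega) h
      omega
    · have := Nat.le_of_dvd (by omega) h
      omega
  · -- `j ≠ 0`, use block `k0`
    have hk0lt : (i * j⁻¹ - 1 : ZMod p).val < p := ZMod.val_lt _
    set k0 : ℕ := (i * j⁻¹ - 1 : ZMod p).val with hk0def
    have heak : ea p k0 = 1 := if_neg (by omega)
    have hebk : eb p k0 = p - 1 - k0 := if_neg (by omega)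
    have hjj : j * j⁻¹ = 1 := mul_inv_cancel₀ hj0
    have hsub : ((p - 1 - k0 : ℕ) : ZMod p) = -(i * j⁻¹) := by
      rw [Nat.cast_sub (by omega : k0 ≤ p - 1), Nat.cast_sub (by omega : 1 ≤ p),
        ZMod.natCast_self, hk0def, ZMod.natCast_val, ZMod.cast_id]
      ring
    have hdvdk : ∀ m : ℕ, p ∣ ((m • i).val * ea p k0 + (m • j).val * eb p k0) := by
      intro m
      rw [heak, hebk, mul_one]
      have hcast : (((m • i).val + (m • j).val * (p - 1 - k0) : ℕ) : ZMod p) = 0 := by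
        rw [Nat.cast_add, Nat.cast_mul, ZMod.natCast_val, ZMod.cast_id,
          ZMod.natCast_val, ZMod.cast_id, hsub, nsmul_eq_mul, nsmul_eq_mul]
        have h9 : (m : ZMod p) * i + (m : ZMod p) * j * (-(i * j⁻¹))
            = (m : ZMod p) * i * (1 - j * j⁻¹) := by ring
        rw [h9, hjj, sub_self, mul_zero]
      exact (ZMod.natCast_eq_zero_iff _ _).mp hcast
    have hz := hblkzero k0 (le_of_lt hk0lt) hdvdk
    have hx0blk : blkOf hodd
        (((Gamma0a p ^ i.val).map zr).mulVec (SbV p j.val) + SaV p i.val) k0 (le_of_lt hk0lt)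
        = ((eps p ^ i.val * Cmat p (eb p k0) j.val).map zr).mulVec (alphaB p) := by
      rw [blkOf_add, SaV_blk_lt hodd i.val hk0lt, add_zero,
        show Gamma0a p = Gamma0 p (ea p) (Ua p) from rfl,
        G0_pow_blk hodd (ea p) (Ua p) i.val (SbV p j.val) (SbV_last hodd j.val) (le_of_lt hk0lt),
        SbV_blk hodd j.val hk0lt, Matrix.mulVec_mulVec, ← Matrix.map_mul, heak, mul_one]
    refine alpha_not_int hodd hp (eps p ^ i.val * Cmat p (eb p k0) j.val)
      (cbar_unit hodd hp heps i.val (eb p k0) hj0) ?_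
    intro t
    obtain ⟨m, hm⟩ := hlat (idxI p hodd k0 t (le_of_lt hk0lt) t.isLt)
    refine ⟨m, ?_⟩
    have h1 : c.vec (idxI p hodd k0 t (le_of_lt hk0lt) t.isLt) = 0 := congrFun hz t
    have h2 := congrFun hx0blk t
    calc ((eps p ^ i.val * Cmat p (eb p k0) j.val).map zr).mulVec (alphaB p) t
        = (((Gamma0a p ^ i.val).map zr).mulVec (SbV p j.val) + SaV p i.val)
            (idxI p hodd k0 t (le_of_lt hk0lt) t.isLt) := h2.symm
      _ = (m : ℝ) := by rw [← hm, h1, sub_zero]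

end CpCp
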